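/- Let T be a symmetric complex a×a matrix with negative definite real part, and let γ⁺, γ⁻ ∈ ℂᵃ satisfy γ⁺ = −T γ⁻. Then the theta-function satisfies the differential equation Σ_{j=1}^a ( γ⁺_j ( z_j θ[T; z, ζ] + (2π/i) ∂θ[T; z, ζ]/∂ζ_j ) + γ⁻_j ∂θ[T; z, ζ]/∂z_j ) = 0 for all z, ζ ∈ ℝᵃ. -/

import Mathlib

open Matrix MeasureTheory Real

noncomputable section

/-- Complexification of a real vector. -/
def cv {ι : Type*} (x : ι → ℝ) : ι → ℂ := fun i => (x i : ℂ)

/-- The theta-function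
`θ[T; z, ζ] = Σ_{k∈ℤᵃ} exp{½ (z + 2πk)ᵗ T (z + 2πk)} e^{i k·ζ}`. -/
def theta {a : ℕ} (T : Matrix (Fin a) (Fin a) ℂ) (z ζ : Fin a → ℝ) : ℂ :=
  ∑' k : Fin a → ℤ,
    Complex.exp
      ((1 / 2 : ℂ) * dotProduct (cv fun i => z i + 2 * π * k i)
          (T.mulVec (cv fun i => z i + 2 * π * k i))
        + Complex.I * ∑ i, (k i : ℂ) * (ζ i : ℂ))

/-!
Each summand `e_k = exp (½ wᵀ T w + i k·ζ)`, `w = z + 2πk`, satisfies the equation by itself: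
`∂e_k/∂ζ_j = i k_j e_k` and, `T` being symmetric, `∂e_k/∂z_j = (T w)_j e_k`, so the operator
sends `e_k` to `e_k (γ⁺·w + γ⁻·T w) = e_k (γ⁺ + T γ⁻)·w = 0`. Since `Re T` is negative
definite, `|e_k| ≤ ∏ᵢ exp (-(c/2) (zᵢ + 2πkᵢ)²)` for some `c > 0`; locally uniformly in `z`
this bounds the series of derivatives by a summable product of one-dimensional Gaussians, so
the series can be differentiated termwise.
-/

theorem exists_pos_mul_norm_sq_le {E : Type*} [NormedAddCommGroup E] [NormedSpace ℝ E]
    [FiniteDimensional ℝ E] {Q : E → ℝ} (hQ : Continuous Q)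
    (hsmul : ∀ (r : ℝ) (x : E), Q (r • x) = r ^ 2 * Q x) (hpos : ∀ x, x ≠ 0 → 0 < Q x) :
    ∃ c > 0, ∀ x, c * ‖x‖ ^ 2 ≤ Q x := by
  have hQ0 : Q 0 = 0 := by simpa using hsmul 0 0
  rcases subsingleton_or_nontrivial E with hE | hE
  · exact ⟨1, one_pos, fun x => by simp [Subsingleton.elim x 0, hQ0]⟩
  obtain ⟨x₀, hx₀, hmin⟩ := (isCompact_sphere (0 : E) 1).exists_isMinOn
    (NormedSpace.sphere_nonempty.2 zero_le_one) hQ.continuousOn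
  refine ⟨Q x₀, hpos x₀ (ne_zero_of_mem_sphere one_ne_zero ⟨x₀, hx₀⟩), fun x => ?_⟩
  rcases eq_or_ne x 0 with rfl | hx
  · simp [hQ0]
  have hxn : 0 < ‖x‖ := norm_pos_iff.2 hx
  have hunit : ‖x‖⁻¹ • x ∈ Metric.sphere (0 : E) 1 := by
    simp [norm_smul, hxn.ne']
  calc Q x₀ * ‖x‖ ^ 2 ≤ Q (‖x‖⁻¹ • x) * ‖x‖ ^ 2 := by gcongr; exact hmin hunit
    _ = Q x := by rw [hsmul]; field_simp

theorem Matrix.PosDef.exists_pos_mul_dotProduct_self_le {ι : Type*} [Fintype ι]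
    {M : Matrix ι ι ℝ} (hM : M.PosDef) : ∃ c > 0, ∀ x : ι → ℝ, c * (x ⬝ᵥ x) ≤ x ⬝ᵥ M *ᵥ x := by
  obtain ⟨c, hc, hle⟩ := exists_pos_mul_norm_sq_le (E := EuclideanSpace ℝ ι)
    (Q := fun x => x.ofLp ⬝ᵥ M *ᵥ x.ofLp) (by fun_prop)
    (fun r x => by simp [mulVec_smul]; ring)
    (fun x hx => by simpa using hM.re_dotProduct_pos (x := x.ofLp) (by simpa using hx))
  refine ⟨c, hc, fun x => ?_⟩
  have hx := hle (WithLp.toLp 2 x)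
  rw [EuclideanSpace.norm_sq_eq] at hx
  simpa [dotProduct, sq] using hx

open Finset in
theorem summable_pi_prod_of_nonneg {ι κ : Type*} [Fintype ι] {f : ι → κ → ℝ}
    (hf0 : ∀ i m, 0 ≤ f i m) (hf : ∀ i, Summable (f i)) :
    Summable fun k : ι → κ => ∏ i, f i (k i) := by
  classical
  refine summable_of_sum_le (c := ∏ i, ∑' m, f i m)
    (fun k => prod_nonneg fun i _ => hf0 i _) fun s => ?_
  calc ∑ k ∈ s, ∏ i, f i (k i)
      ≤ ∑ k ∈ Fintype.piFinset fun i => s.image (· i), ∏ i, f i (k i) :=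
        sum_le_sum_of_subset_of_nonneg
          (fun k hk => Fintype.mem_piFinset.2 fun i => mem_image_of_mem _ hk)
          (fun k _ _ => prod_nonneg fun i _ => hf0 i _)
    _ = ∏ i, ∑ m ∈ s.image (· i), f i m := (prod_univ_sum _ _).symm
    _ ≤ ∏ i, ∑' m, f i m :=
        prod_le_prod (fun i _ => sum_nonneg fun m _ => hf0 i m)
          fun i _ => (hf i).sum_le_tsum _ fun m _ => hf0 i m

theorem hasSum_fderiv_tsum_apply {α 𝕜 E F : Type*} [NontriviallyNormedField 𝕜]
    [IsRCLikeNormedField 𝕜] [NormedAddCommGroup E] [NormedSpace 𝕜 E] [NormedAddCommGroup F]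
    [CompleteSpace F] [NormedSpace 𝕜 F] {f : α → E → F} {f' : α → E → E →L[𝕜] F}
    {u : α → ℝ} {s : Set E} {x : E} (hu : Summable u) (hs : IsOpen s) (h's : IsPreconnected s)
    (hf : ∀ n y, y ∈ s → HasFDerivAt (f n) (f' n y) y) (hf' : ∀ n y, y ∈ s → ‖f' n y‖ ≤ u n)
    (hx : x ∈ s) (hf0 : Summable fun n => f n x) (v : E) :
    HasSum (fun n => f' n x v) (fderiv 𝕜 (fun y => ∑' n, f n y) x v) := by
  rw [(hasFDerivAt_tsum_of_isPreconnected hu hs h's hf hf' hx hf0 hx).fderiv]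
  exact ((hu.of_norm_bounded fun n => hf' n x hx).hasSum.mapL
    (ContinuousLinearMap.apply 𝕜 F v))

theorem sum_norm_mulVec_le {m n 𝕜 : Type*} [Fintype m] [Fintype n] [SeminormedRing 𝕜]
    {M : Matrix m n 𝕜} {v : n → 𝕜} {B : ℝ} (hv : ∀ j, ‖v j‖ ≤ B) :
    ∑ i, ‖(M *ᵥ v) i‖ ≤ (∑ i, ∑ j, ‖M i j‖) * B := by
  rw [Finset.sum_mul]
  refine Finset.sum_le_sum fun i _ => (norm_sum_le _ _).trans ?_
  rw [Finset.sum_mul]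
  exact Finset.sum_le_sum fun j _ => (norm_mul_le _ _).trans
    (mul_le_mul_of_nonneg_left (hv j) (norm_nonneg _))

theorem dotProduct_add_dotProduct_mulVec_eq_zero {ι R : Type*} [Fintype ι] [CommRing R]
    {T : Matrix ι ι R} (hT : Tᵀ = T) {γp γm : ι → R} (hγ : γp = -(T *ᵥ γm)) (w : ι → R) :
    γp ⬝ᵥ w + γm ⬝ᵥ T *ᵥ w = 0 := by
  rw [dotProduct_mulVec, ← mulVec_transpose, hT, hγ, neg_dotProduct, neg_add_cancel]

-- The shape of the bound in `summable_pow_mul_jacobiTheta₂_term_bound` (with `T = 2πc`,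
-- `S = cR`), which supplies the summability.
def gaussianMajorant (c R : ℝ) (m : ℤ) : ℝ :=
  Real.exp (-π * (2 * π * c * m ^ 2 - 2 * (c * R) * |m|))

lemma gaussianMajorant_nonneg (c R : ℝ) (m : ℤ) : 0 ≤ gaussianMajorant c R m :=
  (Real.exp_pos _).le

lemma summable_gaussianMajorant {c : ℝ} (hc : 0 < c) (R : ℝ) :
    Summable (gaussianMajorant c R) := by
  refine (summable_pow_mul_jacobiTheta₂_term_bound (c * R)
    (by positivity : 0 < 2 * π * c) 0).congr fun m => ?_
  simp [gaussianMajorant]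

lemma summable_one_add_abs_mul_gaussianMajorant {c : ℝ} (hc : 0 < c) (R : ℝ) :
    Summable fun m : ℤ => (1 + |(m : ℝ)|) * gaussianMajorant c R m := by
  refine ((summable_gaussianMajorant hc R).add (summable_pow_mul_jacobiTheta₂_term_bound
    (c * R) (by positivity : 0 < 2 * π * c) 1)).congr fun m => ?_
  simp [gaussianMajorant, Int.cast_abs]
  ring

lemma exp_neg_sq_le_gaussianMajorant {c R x : ℝ} (hc : 0 ≤ c) (hx : |x| ≤ R) (m : ℤ) :
    Real.exp (-(c / 2) * (x + 2 * π * m) ^ 2) ≤ gaussianMajorant c R m := by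
  refine Real.exp_le_exp.2 ?_
  have hmx : -(|(m : ℝ)| * R) ≤ m * x := by
    have := mul_le_mul_of_nonneg_left hx (abs_nonneg (m : ℝ))
    rw [← abs_mul] at this
    linarith [neg_abs_le ((m : ℝ) * x)]
  push_cast [Int.cast_abs]
  nlinarith [mul_le_mul_of_nonneg_left hmx (by positivity : 0 ≤ 2 * π * c), sq_nonneg x,
    mul_nonneg hc (sq_nonneg x)]

section ThetaSeries

variable {ι : Type*} [Fintype ι]

def ofRealDotCLM (v : ι → ℂ) : (ι → ℝ) →L[ℝ] ℂ :=
  ∑ i, v i • Complex.ofRealCLM.comp (ContinuousLinearMap.proj i)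

@[simp]
lemma ofRealDotCLM_apply (v : ι → ℂ) (h : ι → ℝ) : ofRealDotCLM v h = v ⬝ᵥ cv h := by
  simp [ofRealDotCLM, dotProduct, cv]

lemma ofRealDotCLM_single [DecidableEq ι] (v : ι → ℂ) (j : ι) :
    ofRealDotCLM v (Pi.single j 1) = v j := by
  have hcv : cv (Pi.single j 1 : ι → ℝ) = Pi.single j 1 := by
    ext i
    by_cases h : i = j <;> simp [cv, h]
  simp [hcv, dotProduct_single]

lemma norm_ofRealDotCLM_le (v : ι → ℂ) : ‖ofRealDotCLM v‖ ≤ ∑ i, ‖v i‖ := by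
  refine ContinuousLinearMap.opNorm_le_bound _ (by positivity) fun h => ?_
  rw [ofRealDotCLM_apply, Finset.sum_mul]
  refine (norm_sum_le _ _).trans (Finset.sum_le_sum fun i _ => ?_)
  rw [norm_mul, cv, Complex.norm_real]
  exact mul_le_mul_of_nonneg_left (norm_le_pi_norm h i) (norm_nonneg _)

lemma hasFDerivAt_quadForm (M : Matrix ι ι ℂ) (x : ι → ℝ) :
    HasFDerivAt (fun y : ι → ℝ => cv y ⬝ᵥ M *ᵥ cv y) (ofRealDotCLM ((M + Mᵀ) *ᵥ cv x)) x := by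
  have hcoord (i : ι) : HasFDerivAt (fun y : ι → ℝ => (y i : ℂ))
      (Complex.ofRealCLM.comp (ContinuousLinearMap.proj i)) x :=
    (Complex.ofRealCLM.comp (ContinuousLinearMap.proj (R := ℝ) (φ := fun _ : ι => ℝ) i)).hasFDerivAt
  have hq : (fun y : ι → ℝ => cv y ⬝ᵥ M *ᵥ cv y)
      = fun y => ∑ i, ∑ j, M i j * ((y i : ℂ) * (y j : ℂ)) := by
    ext y
    simp only [dotProduct, mulVec, cv, Finset.mul_sum]
    exact Finset.sum_congr rfl fun i _ => Finset.sum_congr rfl fun j _ => by ring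
  rw [hq]
  refine (HasFDerivAt.fun_sum fun i _ => HasFDerivAt.fun_sum fun j _ =>
      ((hcoord i).mul (hcoord j)).const_mul (M i j)).congr_fderiv ?_
  ext h
  simp only [smul_add, Finset.sum_add_distrib, _root_.add_apply, _root_.sum_apply,
    _root_.smul_apply, ContinuousLinearMap.comp_apply, ContinuousLinearMap.proj_apply,
    Complex.ofRealCLM_apply, smul_eq_mul, ofRealDotCLM_apply, dotProduct, mulVec,
    Matrix.add_apply, transpose_apply, cv, add_mul, Finset.sum_mul]
  rw [add_comm]
  congr 1
  · exact Finset.sum_congr rfl fun i _ => Finset.sum_congr rfl fun j _ => by ring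
  · rw [Finset.sum_comm]
    exact Finset.sum_congr rfl fun i _ => Finset.sum_congr rfl fun j _ => by ring

lemma re_quadForm_ofReal (M : Matrix ι ι ℂ) (x : ι → ℝ) :
    (cv x ⬝ᵥ M *ᵥ cv x).re = x ⬝ᵥ M.map Complex.re *ᵥ x := by
  simp [dotProduct, mulVec, cv, Complex.re_sum, Finset.mul_sum]

def addTwoPiMul (z : ι → ℝ) (k : ι → ℤ) : ι → ℝ := fun i => z i + 2 * π * k i

def thetaTerm (T : Matrix ι ι ℂ) (k : ι → ℤ) (z ζ : ι → ℝ) : ℂ :=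
  Complex.exp ((1 / 2 : ℂ) * (cv (addTwoPiMul z k) ⬝ᵥ T *ᵥ cv (addTwoPiMul z k))
    + Complex.I * ∑ i, (k i : ℂ) * (ζ i : ℂ))

lemma theta_eq_tsum_thetaTerm {a : ℕ} (T : Matrix (Fin a) (Fin a) ℂ) (z ζ : Fin a → ℝ) :
    theta T z ζ = ∑' k, thetaTerm T k z ζ := rfl

lemma hasFDerivAt_thetaTerm_fst {T : Matrix ι ι ℂ} (hT : Tᵀ = T) (k : ι → ℤ) (z ζ : ι → ℝ) :
    HasFDerivAt (fun x => thetaTerm T k x ζ)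
      (thetaTerm T k z ζ • ofRealDotCLM (T *ᵥ cv (addTwoPiMul z k))) z := by
  have hq : HasFDerivAt (fun x => cv (addTwoPiMul x k) ⬝ᵥ T *ᵥ cv (addTwoPiMul x k))
      (ofRealDotCLM ((T + Tᵀ) *ᵥ cv (addTwoPiMul z k))) z :=
    (hasFDerivAt_comp_add_right fun i => 2 * π * (k i : ℝ)).2 (hasFDerivAt_quadForm T _)
  refine ((hq.const_mul (1 / 2 : ℂ)).add_const _).cexp.congr_fderiv ?_
  ext h
  simp only [hT, add_mulVec, _root_.smul_apply, ofRealDotCLM_apply, add_dotProduct, smul_eq_mul,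
    thetaTerm]
  ring

lemma hasFDerivAt_thetaTerm_snd (T : Matrix ι ι ℂ) (k : ι → ℤ) (z ζ : ι → ℝ) :
    HasFDerivAt (fun η => thetaTerm T k z η)
      ((thetaTerm T k z ζ * Complex.I) • ofRealDotCLM fun i => (k i : ℂ)) ζ := by
  have hk (η : ι → ℝ) :
      ∑ i, (k i : ℂ) * (η i : ℂ) = ofRealDotCLM (fun i => (k i : ℂ)) η := by
    simp [dotProduct, cv]
  simp only [thetaTerm, hk]
  rw [← smul_smul]
  exact (((ofRealDotCLM _).hasFDerivAt.const_mul Complex.I).const_add _).cexp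

lemma norm_thetaTerm (T : Matrix ι ι ℂ) (k : ι → ℤ) (x ζ : ι → ℝ) :
    ‖thetaTerm T k x ζ‖
      = Real.exp (addTwoPiMul x k ⬝ᵥ T.map Complex.re *ᵥ addTwoPiMul x k / 2) := by
  have hlin : (Complex.I * ∑ i, (k i : ℂ) * (ζ i : ℂ)).re = 0 := by
    simp [Complex.re_sum]
  rw [thetaTerm, Complex.norm_exp, Complex.add_re, hlin, add_zero,
    show (1 / 2 : ℂ) = ((1 / 2 : ℝ) : ℂ) by norm_num, Complex.re_ofReal_mul, re_quadForm_ofReal]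
  ring_nf

variable {T : Matrix ι ι ℂ} {c R : ℝ}

lemma norm_thetaTerm_le (hc : 0 < c)
    (hcoer : ∀ y, c * (y ⬝ᵥ y) ≤ y ⬝ᵥ (-T.map Complex.re) *ᵥ y) {x : ι → ℝ}
    (hx : ∀ i, |x i| ≤ R) (k : ι → ℤ) (ζ : ι → ℝ) :
    ‖thetaTerm T k x ζ‖ ≤ ∏ i, gaussianMajorant c R (k i) := by
  set w := addTwoPiMul x k
  have hquad : w ⬝ᵥ T.map Complex.re *ᵥ w / 2 ≤ ∑ i, -(c / 2) * w i ^ 2 := by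
    have hww : ∑ i, -(c / 2) * w i ^ 2 = -(c / 2) * (w ⬝ᵥ w) := by
      simp [dotProduct, Finset.mul_sum, sq]
    have := hcoer w
    rw [neg_mulVec, dotProduct_neg] at this
    linarith
  rw [norm_thetaTerm]
  calc Real.exp (w ⬝ᵥ T.map Complex.re *ᵥ w / 2)
      ≤ Real.exp (∑ i, -(c / 2) * w i ^ 2) := Real.exp_le_exp.2 hquad
    _ = ∏ i, Real.exp (-(c / 2) * w i ^ 2) := Real.exp_sum _ _
    _ ≤ ∏ i, gaussianMajorant c R (k i) :=
        Finset.prod_le_prod (fun i _ => (Real.exp_pos _).le)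
          fun i _ => exp_neg_sq_le_gaussianMajorant hc.le (hx i) (k i)

lemma one_add_abs_le_prod (k : ι → ℤ) (j : ι) : 1 + |(k j : ℝ)| ≤ ∏ i, (1 + |(k i : ℝ)|) := by
  classical
  simpa using Finset.prod_le_prod_of_subset_of_one_le (f := fun i => 1 + |(k i : ℝ)|)
    (Finset.subset_univ {j}) (fun i _ => by positivity)
    (fun i _ _ => le_add_of_nonneg_right (abs_nonneg _))

lemma norm_thetaTerm_smul_fst_le (hc : 0 < c)
    (hcoer : ∀ y, c * (y ⬝ᵥ y) ≤ y ⬝ᵥ (-T.map Complex.re) *ᵥ y) {x : ι → ℝ}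
    (hx : ∀ i, |x i| ≤ R) (k : ι → ℤ) (ζ : ι → ℝ) :
    ‖thetaTerm T k x ζ • ofRealDotCLM (T *ᵥ cv (addTwoPiMul x k))‖
      ≤ (∑ i, ∑ j, ‖T i j‖) * (R + 2 * π) *
          ∏ i, (1 + |(k i : ℝ)|) * gaussianMajorant c R (k i) := by
  have hw (j : ι) : ‖cv (addTwoPiMul x k) j‖ ≤ (R + 2 * π) * ∏ i, (1 + |(k i : ℝ)|) := by
    have hR : 0 ≤ R := (abs_nonneg _).trans (hx j)
    calc ‖cv (addTwoPiMul x k) j‖ = |x j + 2 * π * k j| := Complex.norm_real _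
      _ ≤ R + 2 * π * |(k j : ℝ)| := by
          refine (abs_add_le _ _).trans ?_
          rw [abs_mul, abs_of_pos Real.two_pi_pos]
          linarith [hx j]
      _ ≤ (R + 2 * π) * (1 + |(k j : ℝ)|) := by nlinarith [abs_nonneg (k j : ℝ), Real.pi_pos]
      _ ≤ (R + 2 * π) * ∏ i, (1 + |(k i : ℝ)|) :=
          mul_le_mul_of_nonneg_left (one_add_abs_le_prod k j) (by positivity)
  rw [norm_smul, Finset.prod_mul_distrib]
  calc ‖thetaTerm T k x ζ‖ * ‖ofRealDotCLM (T *ᵥ cv (addTwoPiMul x k))‖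
      ≤ (∏ i, gaussianMajorant c R (k i)) *
          ((∑ i, ∑ j, ‖T i j‖) * ((R + 2 * π) * ∏ i, (1 + |(k i : ℝ)|))) :=
        mul_le_mul (norm_thetaTerm_le hc hcoer hx k ζ)
          ((norm_ofRealDotCLM_le _).trans (sum_norm_mulVec_le hw)) (norm_nonneg _)
          (Finset.prod_nonneg fun i _ => gaussianMajorant_nonneg _ _ _)
    _ = _ := by ring

lemma norm_thetaTerm_smul_snd_le (hc : 0 < c)
    (hcoer : ∀ y, c * (y ⬝ᵥ y) ≤ y ⬝ᵥ (-T.map Complex.re) *ᵥ y) {x : ι → ℝ}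
    (hx : ∀ i, |x i| ≤ R) (k : ι → ℤ) (ζ : ι → ℝ) :
    ‖(thetaTerm T k x ζ * Complex.I) • ofRealDotCLM fun i => (k i : ℂ)‖
      ≤ Fintype.card ι * ∏ i, (1 + |(k i : ℝ)|) * gaussianMajorant c R (k i) := by
  have hk : ‖ofRealDotCLM fun i => (k i : ℂ)‖ ≤ Fintype.card ι * ∏ i, (1 + |(k i : ℝ)|) := by
    refine (norm_ofRealDotCLM_le _).trans ?_
    rw [← nsmul_eq_mul, ← Finset.card_univ]
    refine Finset.sum_le_card_nsmul _ _ _ fun j _ => ?_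
    rw [Complex.norm_intCast]
    exact (le_add_of_nonneg_left zero_le_one).trans (one_add_abs_le_prod k j)
  rw [norm_smul, norm_mul, Complex.norm_I, mul_one, Finset.prod_mul_distrib]
  calc ‖thetaTerm T k x ζ‖ * ‖ofRealDotCLM fun i => (k i : ℂ)‖
      ≤ (∏ i, gaussianMajorant c R (k i)) * (Fintype.card ι * ∏ i, (1 + |(k i : ℝ)|)) :=
        mul_le_mul (norm_thetaTerm_le hc hcoer hx k ζ) hk (norm_nonneg _)
          (Finset.prod_nonneg fun i _ => gaussianMajorant_nonneg _ _ _)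
    _ = _ := by ring

lemma summable_thetaTerm (hneg : (-T.map Complex.re).PosDef) (z ζ : ι → ℝ) :
    Summable fun k => thetaTerm T k z ζ := by
  obtain ⟨c, hc, hcoer⟩ := hneg.exists_pos_mul_dotProduct_self_le
  exact .of_norm_bounded (summable_pi_prod_of_nonneg (f := fun _ => gaussianMajorant c ‖z‖)
      (fun _ => gaussianMajorant_nonneg c ‖z‖) fun _ => summable_gaussianMajorant hc ‖z‖)
    (norm_thetaTerm_le hc hcoer (fun i => by simpa using norm_le_pi_norm z i) · ζ)

lemma summable_prod_one_add_abs_mul_gaussianMajorant (hc : 0 < c) (R : ℝ) :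
    Summable fun k : ι → ℤ => ∏ i, (1 + |(k i : ℝ)|) * gaussianMajorant c R (k i) :=
  summable_pi_prod_of_nonneg (f := fun _ (m : ℤ) => (1 + |(m : ℝ)|) * gaussianMajorant c R m)
    (fun _ (m : ℤ) => mul_nonneg (by positivity) (gaussianMajorant_nonneg c R m))
    fun _ => summable_one_add_abs_mul_gaussianMajorant hc R

lemma hasSum_fderiv_tsum_thetaTerm_fst [DecidableEq ι] (hT : Tᵀ = T)
    (hneg : (-T.map Complex.re).PosDef) (z ζ : ι → ℝ) (j : ι) :
    HasSum (fun k => thetaTerm T k z ζ * (T *ᵥ cv (addTwoPiMul z k)) j)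
      (fderiv ℝ (fun x => ∑' k, thetaTerm T k x ζ) z (Pi.single j 1)) := by
  obtain ⟨c, hc, hcoer⟩ := hneg.exists_pos_mul_dotProduct_self_le
  have hball (x : ι → ℝ) (hx : x ∈ Metric.ball z 1) (i : ι) : |x i| ≤ ‖z‖ + 1 := by
    rw [Metric.mem_ball, dist_eq_norm] at hx
    have := norm_le_pi_norm x i
    have := norm_sub_norm_le x z
    rw [Real.norm_eq_abs] at *
    linarith
  have := hasSum_fderiv_tsum_apply
    ((summable_prod_one_add_abs_mul_gaussianMajorant hc _).mul_left _)
    Metric.isOpen_ball (convex_ball z 1).isPreconnected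
    (fun k x _ => hasFDerivAt_thetaTerm_fst hT k x ζ)
    (fun k x hx => norm_thetaTerm_smul_fst_le hc hcoer (hball x hx) k ζ)
    (Metric.mem_ball_self one_pos) (summable_thetaTerm hneg z ζ) (Pi.single j 1)
  simpa [-ofRealDotCLM_apply, ofRealDotCLM_single] using this

lemma hasSum_fderiv_tsum_thetaTerm_snd [DecidableEq ι] (hneg : (-T.map Complex.re).PosDef)
    (z ζ : ι → ℝ) (j : ι) :
    HasSum (fun k => thetaTerm T k z ζ * Complex.I * k j)
      (fderiv ℝ (fun η => ∑' k, thetaTerm T k z η) ζ (Pi.single j 1)) := by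
  obtain ⟨c, hc, hcoer⟩ := hneg.exists_pos_mul_dotProduct_self_le
  have hz (i : ι) : |z i| ≤ ‖z‖ := by simpa using norm_le_pi_norm z i
  have := hasSum_fderiv_tsum_apply
    ((summable_prod_one_add_abs_mul_gaussianMajorant hc _).mul_left _)
    isOpen_univ isPreconnected_univ
    (fun k η _ => hasFDerivAt_thetaTerm_snd T k z η)
    (fun k η _ => norm_thetaTerm_smul_snd_le hc hcoer hz k η)
    (Set.mem_univ ζ) (summable_thetaTerm hneg z ζ) (Pi.single j 1)
  simpa [-ofRealDotCLM_apply, ofRealDotCLM_single] using this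

lemma thetaTerm_differential_equation (hT : Tᵀ = T) {γp γm : ι → ℂ} (hγ : γp = -(T *ᵥ γm))
    (k : ι → ℤ) (z ζ : ι → ℝ) :
    ∑ j, (γp j * ((z j : ℂ) * thetaTerm T k z ζ
        + (2 * (π : ℂ) / Complex.I) * (thetaTerm T k z ζ * Complex.I * k j))
      + γm j * (thetaTerm T k z ζ * (T *ᵥ cv (addTwoPiMul z k)) j)) = 0 := by
  have h := dotProduct_add_dotProduct_mulVec_eq_zero hT hγ (cv (addTwoPiMul z k))
  calc _ = thetaTerm T k z ζ * (γp ⬝ᵥ cv (addTwoPiMul z k) + γm ⬝ᵥ T *ᵥ cv (addTwoPiMul z k)) := by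
        simp only [dotProduct, mul_add, Finset.mul_sum, ← Finset.sum_add_distrib]
        refine Finset.sum_congr rfl fun j _ => ?_
        simp only [cv, addTwoPiMul]
        field_simp
        push_cast
        ring
    _ = 0 := by rw [h, mul_zero]

end ThetaSeries

/-- the theta-function satisfies the differential equation
`Σ_j (γ⁺_j (z_j θ + (2π/i) ∂θ/∂ζ_j) + γ⁻_j ∂θ/∂z_j) = 0` when `γ⁺ = −T γ⁻`. -/
theorem theta_differential_equation (a : ℕ)
    (T : Matrix (Fin a) (Fin a) ℂ)
    (hsym : Tᵀ = T) (hneg : (-(T.map Complex.re)).PosDef)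
    (γp γm : Fin a → ℂ) (hγ : γp = -(T.mulVec γm)) :
    ∀ z ζ : Fin a → ℝ,
      ∑ j, (γp j * ((z j : ℂ) * theta T z ζ
              + (2 * (π : ℂ) / Complex.I) *
                  fderiv ℝ (fun ζ' => theta T z ζ') ζ (Pi.single j 1))
          + γm j * fderiv ℝ (fun z' => theta T z' ζ) z (Pi.single j 1)) = 0 := by
  intro z ζ
  simp only [theta_eq_tsum_thetaTerm]
  have hsum := hasSum_sum fun j (_ : j ∈ Finset.univ) =>
    ((((summable_thetaTerm hneg z ζ).hasSum.mul_left (z j : ℂ)).add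
        ((hasSum_fderiv_tsum_thetaTerm_snd hneg z ζ j).mul_left (2 * (π : ℂ) / Complex.I))).mul_left
      (γp j)).add ((hasSum_fderiv_tsum_thetaTerm_fst hsym hneg z ζ j).mul_left (γm j))
  simp only [thetaTerm_differential_equation hsym hγ] at hsum
  exact hsum.unique hasSum_zero
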